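/- arXiv:2106.04668 — 3 statements merged into one kernel-verified Lean document; each statement's English description precedes it below -/
import Mathlib

section
/- Let L ≥ 1, let V and I be nonempty finite types, let e ∈ ℝ, let α : I → Fin L → ℝ, and let Δ : V → Fin L → ℝ with Δ f i > 0 for all f, i. Suppose J : (Fin L → ℝ) → ℝ satisfies J(x) = min_{i ∈ I} ⟨α i, x⟩ for every x ∈ stdSimplex ℝ (Fin L), and suppose Σ_{f ∈ V} Δ f j = 1 for every j. Define A(ϖ) = e + Σ_{f ∈ V} ⟨Δ f, ϖ⟩ * J( (fun i => Δ f i * ϖ i / ⟨Δ f, ϖ⟩) ). Then for every ϖ ∈ stdSimplex ℝ (Fin L), A(ϖ) = min over all σ : V → I of ⟨β σ, ϖ⟩, where β σ : Fin L → ℝ is given by (β σ) j = e + Σ_{f ∈ V} Δ f j * (α (σ f)) j. In particular A restricted to the simplex is a minimum of finitely many linear functionals. -/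
/-!
On the simplex, `J` at the reweighted point `x_f = Δ f ⊙ ϖ / ⟨Δ f, ϖ⟩` is a minimum of linear
forms, so multiplying by the positive weight `⟨Δ f, ϖ⟩` clears the denominator and leaves a
minimum of linear forms in `ϖ`. A sum over `f` of minima over `I` is the minimum over all
selections `σ : V → I` of the sums, and the constant `e` is the linear form `e * ∑ j, ϖ j`.
-/

open Finset

theorem Finset.sum_inf'_eq_inf'_pi {V I M : Type*} [Fintype V] [DecidableEq V] [Fintype I]
    [Nonempty I] [AddCommMonoid M] [LinearOrder M] [IsOrderedAddMonoid M] (g : V → I → M) :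
    ∑ f, univ.inf' univ_nonempty (g f) =
      univ.inf' univ_nonempty (fun σ : V → I => ∑ f, g f (σ f)) := by
  refine le_antisymm ?_ ?_
  · exact le_inf' _ _ fun σ _ => sum_le_sum fun f _ => inf'_le _ (mem_univ _)
  · choose σ _ hσ using fun f => exists_mem_eq_inf' (univ_nonempty (α := I)) (g f)
    calc univ.inf' univ_nonempty (fun σ : V → I => ∑ f, g f (σ f))
        ≤ ∑ f, g f (σ f) := inf'_le _ (mem_univ σ)
      _ = ∑ f, univ.inf' univ_nonempty (g f) := sum_congr rfl fun f _ => (hσ f).symm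

section Simplex

variable {ι : Type*} [Fintype ι] {d ϖ : ι → ℝ}

theorem sum_mul_pos_of_mem_stdSimplex (hd : ∀ i, 0 < d i) (hϖ : ϖ ∈ stdSimplex ℝ ι) :
    0 < ∑ i, d i * ϖ i := by
  obtain ⟨j, -, hj⟩ := exists_lt_of_sum_lt (s := univ) (f := 0) (g := ϖ) (by simp [hϖ.2])
  exact sum_pos' (fun i _ => mul_nonneg (hd i).le (hϖ.1 i)) ⟨j, mem_univ j, mul_pos (hd j) hj⟩

theorem reweight_mem_stdSimplex (hd : ∀ i, 0 < d i) (hϖ : ϖ ∈ stdSimplex ℝ ι) :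
    (fun i => d i * ϖ i / ∑ i', d i' * ϖ i') ∈ stdSimplex ℝ ι := by
  have hS := sum_mul_pos_of_mem_stdSimplex hd hϖ
  refine ⟨fun i => div_nonneg (mul_nonneg (hd i).le (hϖ.1 i)) hS.le, ?_⟩
  rw [← sum_div, div_self hS.ne']

end Simplex

theorem mul_inf'_sum_mul_div {ι I : Type*} [Fintype ι] {s : Finset I} (H : s.Nonempty)
    (a : I → ι → ℝ) (y : ι → ℝ) {c : ℝ} (hc : 0 < c) :
    c * s.inf' H (fun k => ∑ l, a k l * (y l / c)) = s.inf' H (fun k => ∑ l, a k l * y l) := by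
  rw [apply_inf'_eq_inf'_comp H (c * ·) fun x y => mul_min_of_nonneg x y hc.le]
  refine inf'_congr H rfl fun k _ => ?_
  simp only [Function.comp_apply, mul_sum]
  exact sum_congr rfl fun l _ => by field_simp

theorem cost_to_go_min_of_hyperplanes_general (L : ℕ)
    (V I : Type*) [Fintype V] [DecidableEq V]
    [Fintype I] [Nonempty I]
    (e : ℝ) (α : I → Fin L → ℝ)
    (Δ : V → Fin L → ℝ) (hΔ : ∀ f i, 0 < Δ f i)
    (J : (Fin L → ℝ) → ℝ)
    (hJ : ∀ x ∈ stdSimplex ℝ (Fin L),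
      J x = Finset.univ.inf' Finset.univ_nonempty (fun i : I => ∑ l, α i l * x l))
    (A : (Fin L → ℝ) → ℝ)
    (hA : ∀ ϖ : Fin L → ℝ,
      A ϖ = e + ∑ f, (∑ i, Δ f i * ϖ i) *
        J (fun i => Δ f i * ϖ i / ∑ i', Δ f i' * ϖ i')) :
    ∀ ϖ ∈ stdSimplex ℝ (Fin L),
      A ϖ = Finset.univ.inf' Finset.univ_nonempty
        (fun σ : V → I =>
          ∑ j, (e + ∑ f, Δ f j * α (σ f) j) * ϖ j) := by
  intro ϖ hϖ
  have hterm : ∀ f, (∑ i, Δ f i * ϖ i) * J (fun i => Δ f i * ϖ i / ∑ i', Δ f i' * ϖ i') =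
      univ.inf' univ_nonempty (fun k : I => ∑ l, α k l * (Δ f l * ϖ l)) := fun f => by
    rw [hJ _ (reweight_mem_stdSimplex (hΔ f) hϖ),
      mul_inf'_sum_mul_div _ _ _ (sum_mul_pos_of_mem_stdSimplex (hΔ f) hϖ)]
  rw [hA, sum_congr rfl fun f _ => hterm f, sum_inf'_eq_inf'_pi,
    apply_inf'_eq_inf'_comp _ (e + ·) fun x y => (min_add_add_left e x y).symm]
  refine inf'_congr _ rfl fun σ _ => ?_
  simp only [Function.comp_apply, add_mul, sum_add_distrib, ← mul_sum, hϖ.2, mul_one, sum_mul]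
  rw [sum_comm]
  exact congrArg (e + ·) (sum_congr rfl fun j _ => sum_congr rfl fun f _ => by ring)

/-- Inductive step of Theorem 2: if the value function at the next stage admits
a finite minimum-of-hyperplanes representation `{α i}`, then the expected
cost-to-go `A` also admits such a representation, indexed by selection
functions `σ : V → I` with hyperplanes `β σ`. -/
theorem cost_to_go_min_of_hyperplanes (L : ℕ) (hL : 1 ≤ L)
    (V I : Type*) [Fintype V] [Nonempty V] [DecidableEq V]
    [Fintype I] [Nonempty I]
    (e : ℝ) (α : I → Fin L → ℝ)
    (Δ : V → Fin L → ℝ) (hΔ : ∀ f i, 0 < Δ f i)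
    (J : (Fin L → ℝ) → ℝ)
    (hJ : ∀ x ∈ stdSimplex ℝ (Fin L),
      J x = Finset.univ.inf' Finset.univ_nonempty (fun i : I => ∑ l, α i l * x l))
    (hΔsum : ∀ j : Fin L, ∑ f, Δ f j = 1)
    (A : (Fin L → ℝ) → ℝ)
    (hA : ∀ ϖ : Fin L → ℝ,
      A ϖ = e + ∑ f, (∑ i, Δ f i * ϖ i) *
        J (fun i => Δ f i * ϖ i / ∑ i', Δ f i' * ϖ i')) :
    ∀ ϖ ∈ stdSimplex ℝ (Fin L),
      A ϖ = Finset.univ.inf' Finset.univ_nonempty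
        (fun σ : V → I =>
          ∑ j, (e + ∑ f, Δ f j * α (σ f) j) * ϖ j) :=
  cost_to_go_min_of_hyperplanes_general L V I e α Δ hΔ J hJ A hA
end

section
/- Fix integers L ≥ 1 and K ≥ 1. For each k ∈ {1,…,K} let V_k be a nonempty finite type, let Δ_k : V_k → Fin L → ℝ satisfy Δ_k f j > 0 for all f, j and Σ_{f ∈ V_k} Δ_k f j = 1 for each j, and let e_k > 0. Let Q : Fin L → Fin L → ℝ be nonnegative and set g(ϖ) = min_{j ∈ Fin L} ⟨Q_j, ϖ⟩. Define J̄_K = g on the simplex and, for 0 ≤ k < K, A_k(ϖ) = e_{k+1} + Σ_{f ∈ V_{k+1}} ⟨Δ_{k+1} f, ϖ⟩ * J̄_{k+1}( (fun i => Δ_{k+1} f i * ϖ i / ⟨Δ_{k+1} f, ϖ⟩) ) and J̄_k(ϖ) = min( g(ϖ), A_k(ϖ) ). Then for every k ∈ {0,…,K-1}, the function A_k is concave on stdSimplex ℝ (Fin L) and continuous on stdSimplex ℝ (Fin L), and likewise every J̄_k is concave and continuous on stdSimplex ℝ (Fin L). -/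
/-!
Each summand of `A_k` is the perspective `ϖ ↦ ⟨Δ f, ϖ⟩ · J̄_{k+1}(ϖ')` of `J̄_{k+1}`, where
`ϖ' = Δ f ⊙ ϖ / ⟨Δ f, ϖ⟩` is the Bayes update of the belief `ϖ`. A perspective of a concave
function is concave: on a convex combination of two beliefs, the updated belief is the convex
combination of the two updated beliefs with weights proportional to `⟨Δ f, ·⟩`. Continuity is
preserved because `⟨Δ f, ·⟩` does not vanish on the simplex. Since `g` is a minimum of linear
functions, backward induction from `J̄_K = g` through `J̄_k = min g A_k` gives the claim.
-/

open Finset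

section FinsetConcave

variable {𝕜 E β ι : Type*} [Semiring 𝕜] [PartialOrder 𝕜] [AddCommMonoid E] [SMul 𝕜 E]
  [AddCommMonoid β] [Module 𝕜 β] {s : Set E} {t : Finset ι} {f : ι → E → β}

theorem ConcaveOn.finset_sum [PartialOrder β] [IsOrderedAddMonoid β] (hs : Convex 𝕜 s)
    (hf : ∀ i ∈ t, ConcaveOn 𝕜 s (f i)) : ConcaveOn 𝕜 s (∑ i ∈ t, f i) :=
  Finset.sum_induction f (ConcaveOn 𝕜 s) (fun _ _ => ConcaveOn.add) (concaveOn_const 0 hs) hf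

theorem ConcaveOn.finset_inf' [LinearOrder β] [IsOrderedAddMonoid β] [PosSMulStrictMono 𝕜 β]
    (H : t.Nonempty) (hf : ∀ i ∈ t, ConcaveOn 𝕜 s (f i)) : ConcaveOn 𝕜 s (t.inf' H f) :=
  Finset.inf'_induction H f (fun _ h₁ _ h₂ => h₁.inf h₂) hf

end FinsetConcave

theorem ConcaveOn.perspective_comp {E F : Type*} [AddCommGroup E] [Module ℝ E]
    [AddCommGroup F] [Module ℝ F] {s : Set E} {t : Set F} {h : F → ℝ}
    (hh : ConcaveOn ℝ t h) (hs : Convex ℝ s) (ℓ : E →ₗ[ℝ] ℝ) (T : E →ₗ[ℝ] F) (hℓ : ∀ x ∈ s, 0 < ℓ x)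
    (hT : ∀ x ∈ s, (ℓ x)⁻¹ • T x ∈ t) :
    ConcaveOn ℝ s fun x => ℓ x * h ((ℓ x)⁻¹ • T x) := by
  refine ⟨hs, fun x hx y hy a b ha hb hab => ?_⟩
  have hℓx := hℓ x hx
  have hℓy := hℓ y hy
  set m := ℓ (a • x + b • y) with hm_def
  have hm : 0 < m := hℓ _ (hs hx hy ha hb hab)
  have hm_eq : m = a * ℓ x + b * ℓ y := by simp [hm_def]
  have hupdate : m⁻¹ • T (a • x + b • y) =
      (a * ℓ x / m) • ((ℓ x)⁻¹ • T x) + (b * ℓ y / m) • ((ℓ y)⁻¹ • T y) := by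
    simp only [map_add, map_smul, smul_add, smul_smul]
    congr 2 <;> field_simp
  have hconc := hh.2 (hT x hx) (hT y hy)
    (div_nonneg (mul_nonneg ha hℓx.le) hm.le) (div_nonneg (mul_nonneg hb hℓy.le) hm.le)
    (by rw [← add_div, ← hm_eq, div_self hm.ne'])
  rw [← hupdate] at hconc
  simp only [smul_eq_mul] at hconc ⊢
  calc a * (ℓ x * h ((ℓ x)⁻¹ • T x)) + b * (ℓ y * h ((ℓ y)⁻¹ • T y))
      = m * (a * ℓ x / m * h ((ℓ x)⁻¹ • T x) + b * ℓ y / m * h ((ℓ y)⁻¹ • T y)) := by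
        field_simp
    _ ≤ m * h (m⁻¹ • T (a • x + b • y)) := by gcongr

theorem ContinuousOn.perspective_comp {E F : Type*} [TopologicalSpace E] [SMul ℝ F]
    [TopologicalSpace F] [ContinuousSMul ℝ F] {s : Set E} {t : Set F} {h : F → ℝ}
    (hh : ContinuousOn h t) {ℓ : E → ℝ} {T : E → F}
    (hℓc : ContinuousOn ℓ s) (hTc : ContinuousOn T s) (hℓ : ∀ x ∈ s, ℓ x ≠ 0)
    (hT : Set.MapsTo (fun x => (ℓ x)⁻¹ • T x) s t) :
    ContinuousOn (fun x => ℓ x * h ((ℓ x)⁻¹ • T x)) s :=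
  hℓc.mul (hh.comp ((hℓc.inv₀ hℓ).smul hTc) hT)

section BayesUpdate

variable {ι : Type*} [Fintype ι] {c ϖ : ι → ℝ}

noncomputable def bayesUpdate (c ϖ : ι → ℝ) (i : ι) : ℝ := c i * ϖ i / ∑ j, c j * ϖ j

theorem bayesUpdate_eq_smul : bayesUpdate c ϖ = (c ⬝ᵥ ϖ)⁻¹ • (c * ϖ) := by
  ext i
  simp [bayesUpdate, dotProduct, div_eq_inv_mul]

theorem dotProduct_pos_of_mem_stdSimplex (hc : ∀ i, 0 < c i) (hϖ : ϖ ∈ stdSimplex ℝ ι) :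
    0 < c ⬝ᵥ ϖ := by
  obtain ⟨i, hi⟩ : ∃ i, ϖ i ≠ 0 := by
    by_contra! h
    simpa [h] using hϖ.2
  exact Finset.sum_pos' (fun j _ => mul_nonneg (hc j).le (hϖ.1 j))
    ⟨i, mem_univ i, mul_pos (hc i) ((hϖ.1 i).lt_of_ne' hi)⟩

theorem bayesUpdate_mem_stdSimplex (hc : ∀ i, 0 < c i) (hϖ : ϖ ∈ stdSimplex ℝ ι) :
    bayesUpdate c ϖ ∈ stdSimplex ℝ ι := by
  have hpos := dotProduct_pos_of_mem_stdSimplex hc hϖ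
  refine ⟨fun i => div_nonneg (mul_nonneg (hc i).le (hϖ.1 i)) hpos.le, ?_⟩
  simp only [bayesUpdate]
  rw [← Finset.sum_div]
  exact div_self hpos.ne'

variable {h : (ι → ℝ) → ℝ}

theorem ConcaveOn.mul_comp_bayesUpdate (hc : ∀ i, 0 < c i)
    (hh : ConcaveOn ℝ (stdSimplex ℝ ι) h) :
    ConcaveOn ℝ (stdSimplex ℝ ι) fun ϖ => (c ⬝ᵥ ϖ) * h (bayesUpdate c ϖ) := by
  refine (hh.perspective_comp (convex_stdSimplex ℝ ι) (dotProductBilin ℝ ℝ c)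
    (LinearMap.mulLeft ℝ c) (fun ϖ hϖ => dotProduct_pos_of_mem_stdSimplex hc hϖ)
    (fun ϖ hϖ => ?_)).congr (fun ϖ _ => ?_)
  · simpa [bayesUpdate_eq_smul] using bayesUpdate_mem_stdSimplex hc hϖ
  · simp [bayesUpdate_eq_smul]

theorem ContinuousOn.mul_comp_bayesUpdate (hc : ∀ i, 0 < c i)
    (hh : ContinuousOn h (stdSimplex ℝ ι)) :
    ContinuousOn (fun ϖ => (c ⬝ᵥ ϖ) * h (bayesUpdate c ϖ)) (stdSimplex ℝ ι) := by
  simp only [bayesUpdate_eq_smul]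
  exact hh.perspective_comp (by fun_prop) (by fun_prop)
    (fun ϖ hϖ => (dotProduct_pos_of_mem_stdSimplex hc hϖ).ne')
    fun ϖ hϖ => by simpa only [bayesUpdate_eq_smul] using bayesUpdate_mem_stdSimplex hc hϖ

end BayesUpdate

section CostToGo

variable {ι V : Type*} [Fintype ι] [Fintype V] {Δ : V → ι → ℝ} {J : (ι → ℝ) → ℝ}

noncomputable def expectedCostToGo (e : ℝ) (Δ : V → ι → ℝ) (J : (ι → ℝ) → ℝ) (ϖ : ι → ℝ) : ℝ :=
  e + ∑ f, (Δ f ⬝ᵥ ϖ) * J (bayesUpdate (Δ f) ϖ)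

theorem concaveOn_expectedCostToGo (e : ℝ) (hΔ : ∀ f i, 0 < Δ f i)
    (hJ : ConcaveOn ℝ (stdSimplex ℝ ι) J) :
    ConcaveOn ℝ (stdSimplex ℝ ι) (expectedCostToGo e Δ J) := by
  have hsum : ConcaveOn ℝ (stdSimplex ℝ ι)
      (∑ f, fun ϖ => (Δ f ⬝ᵥ ϖ) * J (bayesUpdate (Δ f) ϖ)) :=
    ConcaveOn.finset_sum (convex_stdSimplex ℝ ι) fun f _ => hJ.mul_comp_bayesUpdate (hΔ f)
  exact (hsum.add_const e).congr fun ϖ _ => by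
    simp [expectedCostToGo, Finset.sum_apply, add_comm]

theorem continuousOn_expectedCostToGo (e : ℝ) (hΔ : ∀ f i, 0 < Δ f i)
    (hJ : ContinuousOn J (stdSimplex ℝ ι)) :
    ContinuousOn (expectedCostToGo e Δ J) (stdSimplex ℝ ι) :=
  continuousOn_const.add <| continuousOn_finsetSum _ fun f _ =>
    hJ.mul_comp_bayesUpdate (hΔ f)

end CostToGo

theorem cost_to_go_concave_continuous_general (L K : ℕ) (hL : 1 ≤ L)
    (V : ℕ → Type*) [∀ k, Fintype (V k)]
    (Δ : ∀ k, V k → Fin L → ℝ)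
    (hΔpos : ∀ k, 1 ≤ k → k ≤ K → ∀ (f : V k) (j : Fin L), 0 < Δ k f j)
    (e : ℕ → ℝ)
    (Q : Fin L → Fin L → ℝ)
    (g : (Fin L → ℝ) → ℝ)
    (hg : ∀ ϖ : Fin L → ℝ,
      g ϖ = Finset.univ.inf' (Finset.univ_nonempty_iff.mpr ⟨⟨0, hL⟩⟩)
        (fun j : Fin L => ∑ i, Q i j * ϖ i))
    (Jb A : ℕ → (Fin L → ℝ) → ℝ)
    (hJK : ∀ ϖ ∈ stdSimplex ℝ (Fin L), Jb K ϖ = g ϖ)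
    (hA : ∀ k < K, ∀ ϖ ∈ stdSimplex ℝ (Fin L),
      A k ϖ = e (k + 1) + ∑ f : V (k + 1), (∑ i, Δ (k + 1) f i * ϖ i) *
        Jb (k + 1) (fun i => Δ (k + 1) f i * ϖ i / ∑ i', Δ (k + 1) f i' * ϖ i'))
    (hJ : ∀ k < K, ∀ ϖ ∈ stdSimplex ℝ (Fin L),
      Jb k ϖ = min (g ϖ) (A k ϖ)) :
    (∀ k < K, ConcaveOn ℝ (stdSimplex ℝ (Fin L)) (A k) ∧
      ContinuousOn (A k) (stdSimplex ℝ (Fin L))) ∧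
    (∀ k ≤ K, ConcaveOn ℝ (stdSimplex ℝ (Fin L)) (Jb k) ∧
      ContinuousOn (Jb k) (stdSimplex ℝ (Fin L))) := by
  set S := stdSimplex ℝ (Fin L)
  have hg_eq : g = univ.inf' (univ_nonempty_iff.mpr ⟨⟨0, hL⟩⟩)
      fun j ϖ => (fun i => Q i j) ⬝ᵥ ϖ := by
    ext ϖ
    simp [hg, Finset.inf'_apply, dotProduct]
  have hg_conc : ConcaveOn ℝ S g := hg_eq ▸ ConcaveOn.finset_inf' _ fun j _ =>
    (dotProductBilin ℝ ℝ fun i => Q i j).concaveOn (convex_stdSimplex ℝ _)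
  have hg_cont : ContinuousOn g S := hg_eq ▸ (Continuous.finset_inf' _ fun j _ =>
    (dotProductBilin ℝ ℝ fun i => Q i j).continuous_of_finiteDimensional).continuousOn
  have hA_of_Jb : ∀ k < K, ConcaveOn ℝ S (Jb (k + 1)) ∧ ContinuousOn (Jb (k + 1)) S →
      ConcaveOn ℝ S (A k) ∧ ContinuousOn (A k) S := fun k hk ⟨hconc, hcont⟩ =>
    have hΔ := hΔpos (k + 1) (by omega) (by omega)
    ⟨(concaveOn_expectedCostToGo (e (k + 1)) hΔ hconc).congr fun ϖ hϖ => (hA k hk ϖ hϖ).symm,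
      (continuousOn_expectedCostToGo (e (k + 1)) hΔ hcont).congr fun ϖ hϖ => hA k hk ϖ hϖ⟩
  have hJb : ∀ k ≤ K, ConcaveOn ℝ S (Jb k) ∧ ContinuousOn (Jb k) S := by
    intro k hk
    induction hk using Nat.decreasingInduction with
    | self => exact ⟨hg_conc.congr fun ϖ hϖ => (hJK ϖ hϖ).symm, hg_cont.congr hJK⟩
    | of_succ k hk ih =>
      obtain ⟨hA_conc, hA_cont⟩ := hA_of_Jb k hk ih
      exact ⟨(hg_conc.inf hA_conc).congr fun ϖ hϖ => (hJ k hk ϖ hϖ).symm,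
        (hg_cont.inf hA_cont).congr (hJ k hk)⟩
  exact ⟨fun k hk => hA_of_Jb k hk (hJb (k + 1) hk), hJb⟩

/-- Lemma 2 of the paper: the expected cost-to-go functions `A_k`,
`k = 0,…,K-1`, of the dynamic program of Theorem 1, and the value functions
`J̄_k`, are concave and continuous on the probability simplex. -/
theorem cost_to_go_concave_continuous (L K : ℕ) (hL : 1 ≤ L) (hK : 1 ≤ K)
    (V : ℕ → Type*) [∀ k, Fintype (V k)] [∀ k, Nonempty (V k)]
    (Δ : ∀ k, V k → Fin L → ℝ)
    (hΔpos : ∀ k, 1 ≤ k → k ≤ K → ∀ (f : V k) (j : Fin L), 0 < Δ k f j)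
    (hΔsum : ∀ k, 1 ≤ k → k ≤ K → ∀ j : Fin L, ∑ f, Δ k f j = 1)
    (e : ℕ → ℝ) (he : ∀ k, 1 ≤ k → k ≤ K → 0 < e k)
    (Q : Fin L → Fin L → ℝ) (hQ : ∀ i j, 0 ≤ Q i j)
    (g : (Fin L → ℝ) → ℝ)
    (hg : ∀ ϖ : Fin L → ℝ,
      g ϖ = Finset.univ.inf' (Finset.univ_nonempty_iff.mpr ⟨⟨0, hL⟩⟩)
        (fun j : Fin L => ∑ i, Q i j * ϖ i))
    (Jb A : ℕ → (Fin L → ℝ) → ℝ)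
    (hJK : ∀ ϖ ∈ stdSimplex ℝ (Fin L), Jb K ϖ = g ϖ)
    (hA : ∀ k < K, ∀ ϖ ∈ stdSimplex ℝ (Fin L),
      A k ϖ = e (k + 1) + ∑ f : V (k + 1), (∑ i, Δ (k + 1) f i * ϖ i) *
        Jb (k + 1) (fun i => Δ (k + 1) f i * ϖ i / ∑ i', Δ (k + 1) f i' * ϖ i'))
    (hJ : ∀ k < K, ∀ ϖ ∈ stdSimplex ℝ (Fin L),
      Jb k ϖ = min (g ϖ) (A k ϖ)) :
    (∀ k < K, ConcaveOn ℝ (stdSimplex ℝ (Fin L)) (A k) ∧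
      ContinuousOn (A k) (stdSimplex ℝ (Fin L))) ∧
    (∀ k ≤ K, ConcaveOn ℝ (stdSimplex ℝ (Fin L)) (Jb k) ∧
      ContinuousOn (Jb k) (stdSimplex ℝ (Fin L))) :=
  cost_to_go_concave_continuous_general L K hL V Δ hΔpos e Q g hg Jb A hJK hA hJ
end

section
/- Fix integers L ≥ 1 and K ≥ 1. For each k ∈ {1,…,K} let V_k be a nonempty finite type, let Δ_k : V_k → Fin L → ℝ satisfy Δ_k f j > 0 for all f, j and Σ_{f ∈ V_k} Δ_k f j = 1 for each j, and let e_k > 0. Let Q : Fin L → Fin L → ℝ be nonnegative and set g(ϖ) = min_{j ∈ Fin L} ⟨Q_j, ϖ⟩. Define J̄_K = g on the simplex and, for 0 ≤ k < K, A_k(ϖ) = e_{k+1} + Σ_{f ∈ V_{k+1}} ⟨Δ_{k+1} f, ϖ⟩ * J̄_{k+1}( (fun i => Δ_{k+1} f i * ϖ i / ⟨Δ_{k+1} f, ϖ⟩) ) and J̄_k(ϖ) = min( g(ϖ), A_k(ϖ) ). Then for every stage k ∈ {0,…,K} there exists a nonempty finite set of vectors {α_k^i} ⊆ (Fin L → ℝ)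 such that J̄_k(ϖ) = min_i ⟨α_k^i, ϖ⟩ for all ϖ ∈ stdSimplex ℝ (Fin L); moreover at stage K one may take {α_K^i} = {Q_j : j ∈ Fin L}. -/
/-!
The functions on the simplex that are minima of finitely many linear functionals `ϖ ↦ ⟨α, ϖ⟩`
form a class closed under every operation of the Bellman recursion: pointwise minima (take the
union of the families), adding a constant `c` (on the simplex `c = ⟨(c, …, c), ϖ⟩`), finite
sums (a sum of minima is the minimum over all choices of one summand each), and the Bayesian
update `ϖ ↦ ⟨w, ϖ⟩ J(w ⊙ ϖ / ⟨w, ϖ⟩)`, which turns `min_α ⟨α, ·⟩` into `min_α ⟨w ⊙ α, ·⟩`.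
Backward induction from `J̄_K = g = min_j ⟨Q_j, ·⟩` then gives the claim at every stage.
-/

open Finset

lemma Finset.sum_inf'_eq_inf'_piFinset {ι α M : Type*} [Fintype ι] [DecidableEq ι]
    [AddCommMonoid M] [LinearOrder M] [IsOrderedAddMonoid M] {s : ι → Finset α}
    (hs : ∀ i, (s i).Nonempty) (φ : ι → α → M) :
    ∑ i, (s i).inf' (hs i) (φ i) =
      (Fintype.piFinset s).inf' (Fintype.piFinset_nonempty.2 hs) fun c => ∑ i, φ i (c i) := by
  refine le_antisymm ?_ ?_
  · exact le_inf' _ _ fun c hc =>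
      sum_le_sum fun i _ => inf'_le _ (Fintype.mem_piFinset.mp hc i)
  · choose a ha hmin using fun i => exists_mem_eq_inf' (hs i) (φ i)
    calc (Fintype.piFinset s).inf' _ (fun c => ∑ i, φ i (c i))
        ≤ ∑ i, φ i (a i) := inf'_le _ (Fintype.mem_piFinset.mpr ha)
      _ = ∑ i, (s i).inf' (hs i) (φ i) := sum_congr rfl fun i _ => (hmin i).symm

section Simplex

variable {ι : Type*} [Fintype ι] {w x : ι → ℝ}

lemma dotProduct_pos_of_mem_stdSimplex_s11 (hw : ∀ i, 0 < w i) (hx : x ∈ stdSimplex ℝ ι) :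
    0 < w ⬝ᵥ x := by
  obtain ⟨i, -, hi⟩ : ∃ i ∈ univ, (0 : ℝ) < x i :=
    exists_lt_of_sum_lt (by simp [hx.2])
  exact sum_pos' (fun j _ => mul_nonneg (hw j).le (hx.1 j)) ⟨i, mem_univ i, mul_pos (hw i) hi⟩

lemma normalize_mul_mem_stdSimplex (hw : ∀ i, 0 < w i) (hx : x ∈ stdSimplex ℝ ι) :
    (fun i => w i * x i / w ⬝ᵥ x) ∈ stdSimplex ℝ ι := by
  have hpos := dotProduct_pos_of_mem_stdSimplex_s11 hw hx
  refine ⟨fun i => div_nonneg (mul_nonneg (hw i).le (hx.1 i)) hpos.le, ?_⟩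
  rw [← sum_div]
  exact div_self hpos.ne'

end Simplex

def IsMinOfLinearOn {ι : Type*} [Fintype ι] (s : Set (ι → ℝ)) (J : (ι → ℝ) → ℝ) : Prop :=
  ∃ (t : Finset (ι → ℝ)) (ht : t.Nonempty), ∀ x ∈ s, J x = t.inf' ht (· ⬝ᵥ x)

namespace IsMinOfLinearOn

variable {ι : Type*} [Fintype ι] {s : Set (ι → ℝ)} {J J' : (ι → ℝ) → ℝ}

lemma congr (h : IsMinOfLinearOn s J) (hJ : ∀ x ∈ s, J' x = J x) : IsMinOfLinearOn s J' := by
  obtain ⟨t, ht, hJt⟩ := h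
  exact ⟨t, ht, fun x hx => (hJ x hx).trans (hJt x hx)⟩

lemma min (h : IsMinOfLinearOn s J) (h' : IsMinOfLinearOn s J') :
    IsMinOfLinearOn s fun x => min (J x) (J' x) := by
  classical
  obtain ⟨t, ht, hJt⟩ := h
  obtain ⟨t', ht', hJt'⟩ := h'
  exact ⟨t ∪ t', ht.mono subset_union_left, fun x hx => by
    dsimp only
    rw [inf'_union ht ht', hJt x hx, hJt' x hx]⟩

lemma sum {κ : Type*} [Fintype κ] {J : κ → (ι → ℝ) → ℝ} (h : ∀ f, IsMinOfLinearOn s (J f)) :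
    IsMinOfLinearOn s fun x => ∑ f, J f x := by
  classical
  choose t ht hJt using h
  refine ⟨(Fintype.piFinset t).image (fun c => ∑ f, c f),
    (Fintype.piFinset_nonempty.2 ht).image _, fun x hx => ?_⟩
  dsimp only
  rw [inf'_image, sum_congr rfl fun f _ => hJt f x hx, sum_inf'_eq_inf'_piFinset]
  exact inf'_congr _ rfl fun c _ => (sum_dotProduct _ _ _).symm

lemma const_add (c : ℝ) (h : IsMinOfLinearOn (stdSimplex ℝ ι) J) :
    IsMinOfLinearOn (stdSimplex ℝ ι) fun x => c + J x := by
  classical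
  obtain ⟨t, ht, hJt⟩ := h
  refine ⟨t.image (Function.const ι c + ·), ht.image _, fun x hx => ?_⟩
  have hconst : Function.const ι c ⬝ᵥ x = c := by
    simp [dotProduct, ← mul_sum, hx.2]
  dsimp only
  rw [inf'_image, hJt x hx, apply_inf'_eq_inf'_comp (g := (c + ·)) ht
    fun a b => (min_add_add_left c a b).symm]
  exact inf'_congr _ rfl fun a _ => by simp only [Function.comp, add_dotProduct, hconst]

lemma perspective {w : ι → ℝ} (hw : ∀ i, 0 < w i) (h : IsMinOfLinearOn (stdSimplex ℝ ι) J) :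
    IsMinOfLinearOn (stdSimplex ℝ ι) fun x => (w ⬝ᵥ x) * J (fun i => w i * x i / w ⬝ᵥ x) := by
  classical
  obtain ⟨t, ht, hJt⟩ := h
  refine ⟨t.image (w * ·), ht.image _, fun x hx => ?_⟩
  have hpos := dotProduct_pos_of_mem_stdSimplex_s11 hw hx
  have hne := hpos.ne'
  dsimp only
  rw [inf'_image, hJt _ (normalize_mul_mem_stdSimplex hw hx),
    apply_inf'_eq_inf'_comp ht _ fun a b => mul_min_of_nonneg a b hpos.le]
  refine inf'_congr _ rfl fun a _ => ?_
  generalize w ⬝ᵥ x = D at hne ⊢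
  simp only [Function.comp_apply, dotProduct, mul_sum, Pi.mul_apply]
  refine sum_congr rfl fun i _ => ?_
  field_simp

end IsMinOfLinearOn

theorem value_function_min_of_hyperplanes_general (L K : ℕ) (hL : 1 ≤ L)
    (V : ℕ → Type*) [∀ k, Fintype (V k)]
    (Δ : ∀ k, V k → Fin L → ℝ)
    (hΔpos : ∀ k, 1 ≤ k → k ≤ K → ∀ (f : V k) (j : Fin L), 0 < Δ k f j)
    (e : ℕ → ℝ)
    (Q : Fin L → Fin L → ℝ)
    (g : (Fin L → ℝ) → ℝ)
    (hg : ∀ ϖ : Fin L → ℝ,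
      g ϖ = Finset.univ.inf' (Finset.univ_nonempty_iff.mpr ⟨⟨0, hL⟩⟩)
        (fun j : Fin L => ∑ i, Q i j * ϖ i))
    (Jb A : ℕ → (Fin L → ℝ) → ℝ)
    (hJK : ∀ ϖ ∈ stdSimplex ℝ (Fin L), Jb K ϖ = g ϖ)
    (hA : ∀ k < K, ∀ ϖ ∈ stdSimplex ℝ (Fin L),
      A k ϖ = e (k + 1) + ∑ f : V (k + 1), (∑ i, Δ (k + 1) f i * ϖ i) *
        Jb (k + 1) (fun i => Δ (k + 1) f i * ϖ i / ∑ i', Δ (k + 1) f i' * ϖ i'))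
    (hJ : ∀ k < K, ∀ ϖ ∈ stdSimplex ℝ (Fin L),
      Jb k ϖ = min (g ϖ) (A k ϖ)) :
    (∀ k ≤ K, ∃ (s : Finset (Fin L → ℝ)) (hs : s.Nonempty),
      ∀ ϖ ∈ stdSimplex ℝ (Fin L),
        Jb k ϖ = s.inf' hs (fun a => ∑ i, a i * ϖ i)) ∧
    (∃ hs : (@Finset.image _ _ (Classical.decEq _)
        (fun j : Fin L => fun i : Fin L => Q i j) Finset.univ).Nonempty,
      ∀ ϖ ∈ stdSimplex ℝ (Fin L),
        Jb K ϖ = (@Finset.image _ _ (Classical.decEq _)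
          (fun j : Fin L => fun i : Fin L => Q i j) Finset.univ).inf' hs
            (fun a => ∑ i, a i * ϖ i)) := by
  -- the instance the statement uses to form the image of the `Q_j`
  let : DecidableEq (Fin L → ℝ) := Classical.decEq _
  set sQ := univ.image fun j (i : Fin L) => Q i j
  have hsQ : sQ.Nonempty := (univ_nonempty_iff.mpr ⟨⟨0, hL⟩⟩).image _
  have hgQ : ∀ ϖ, g ϖ = sQ.inf' hsQ (· ⬝ᵥ ϖ) := fun ϖ =>
    (hg ϖ).trans (inf'_comp_eq_image _ (· ⬝ᵥ ϖ))
  have hJK' : ∀ ϖ ∈ stdSimplex ℝ (Fin L), Jb K ϖ = sQ.inf' hsQ (· ⬝ᵥ ϖ) :=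
    fun ϖ hϖ => (hJK ϖ hϖ).trans (hgQ ϖ)
  have hg_min : IsMinOfLinearOn (stdSimplex ℝ (Fin L)) g := ⟨sQ, hsQ, fun ϖ _ => hgQ ϖ⟩
  suffices h : ∀ k ≤ K, IsMinOfLinearOn (stdSimplex ℝ (Fin L)) (Jb k) from ⟨h, hsQ, hJK'⟩
  intro k hk
  induction hk using Nat.decreasingInduction with
  | self => exact hg_min.congr hJK
  | of_succ k hk hJ_succ =>
    have hΔ : ∀ f j, 0 < Δ (k + 1) f j := hΔpos (k + 1) (by omega) (by omega)
    have hA_min : IsMinOfLinearOn (stdSimplex ℝ (Fin L)) (A k) :=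
      ((IsMinOfLinearOn.sum fun f => hJ_succ.perspective (hΔ f)).const_add (e (k + 1))).congr
        (hA k hk)
    exact (hg_min.min hA_min).congr (hJ k hk)

/-- Theorem 2 of the paper: at every stage `k ∈ {0,…,K}` there exists a
nonempty finite set `{α_k^i}` of vectors such that the dynamic-programming
value function satisfies `J̄_k(ϖ) = min_i ⟨α_k^i, ϖ⟩` on the simplex; at stage
`K` one may take `{α_K^i} = {Q_j : j}`. -/
theorem value_function_min_of_hyperplanes (L K : ℕ) (hL : 1 ≤ L) (hK : 1 ≤ K)
    (V : ℕ → Type*) [∀ k, Fintype (V k)] [∀ k, Nonempty (V k)]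
    (Δ : ∀ k, V k → Fin L → ℝ)
    (hΔpos : ∀ k, 1 ≤ k → k ≤ K → ∀ (f : V k) (j : Fin L), 0 < Δ k f j)
    (hΔsum : ∀ k, 1 ≤ k → k ≤ K → ∀ j : Fin L, ∑ f, Δ k f j = 1)
    (e : ℕ → ℝ) (he : ∀ k, 1 ≤ k → k ≤ K → 0 < e k)
    (Q : Fin L → Fin L → ℝ) (hQ : ∀ i j, 0 ≤ Q i j)
    (g : (Fin L → ℝ) → ℝ)
    (hg : ∀ ϖ : Fin L → ℝ,
      g ϖ = Finset.univ.inf' (Finset.univ_nonempty_iff.mpr ⟨⟨0, hL⟩⟩)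
        (fun j : Fin L => ∑ i, Q i j * ϖ i))
    (Jb A : ℕ → (Fin L → ℝ) → ℝ)
    (hJK : ∀ ϖ ∈ stdSimplex ℝ (Fin L), Jb K ϖ = g ϖ)
    (hA : ∀ k < K, ∀ ϖ ∈ stdSimplex ℝ (Fin L),
      A k ϖ = e (k + 1) + ∑ f : V (k + 1), (∑ i, Δ (k + 1) f i * ϖ i) *
        Jb (k + 1) (fun i => Δ (k + 1) f i * ϖ i / ∑ i', Δ (k + 1) f i' * ϖ i'))
    (hJ : ∀ k < K, ∀ ϖ ∈ stdSimplex ℝ (Fin L),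
      Jb k ϖ = min (g ϖ) (A k ϖ)) :
    (∀ k ≤ K, ∃ (s : Finset (Fin L → ℝ)) (hs : s.Nonempty),
      ∀ ϖ ∈ stdSimplex ℝ (Fin L),
        Jb k ϖ = s.inf' hs (fun a => ∑ i, a i * ϖ i)) ∧
    (∃ hs : (@Finset.image _ _ (Classical.decEq _)
        (fun j : Fin L => fun i : Fin L => Q i j) Finset.univ).Nonempty,
      ∀ ϖ ∈ stdSimplex ℝ (Fin L),
        Jb K ϖ = (@Finset.image _ _ (Classical.decEq _)
          (fun j : Fin L => fun i : Fin L => Q i j) Finset.univ).inf' hs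
            (fun a => ∑ i, a i * ϖ i)) :=
  value_function_min_of_hyperplanes_general L K hL V Δ hΔpos e Q g hg Jb A hJK hA hJ
end
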